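/- Dominated convergence theorem for sublinear expectation: if X_m → X pointwise on a countable discrete space, |X_m| ≤ C for a uniform constant C, and P is a uniformly tight family of probability measures, then lim_m sup_{P∈P} E_P[X_m] = sup_{P∈P} E_P[X]. -/

import Mathlib

/-!
Fix `η > 0` and a finite set `K` with `P Kᶜ < η` for every `P ∈ Ps`. On `K` the convergence
`X_m → X` is uniform, and off `K` the integrands differ by at most `2C`, so
`|E_P[X_m] - E_P[X]| ≤ sup_K |X_m - X| + 2Cη` uniformly in `P ∈ Ps`. A supremum over `Ps` is
`1`-Lipschitz for the uniform distance, so the sublinear expectations converge as well.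
-/

open MeasureTheory Filter

lemma abs_le_of_tendsto {ι : Type*} {l : Filter ι} [l.NeBot] {f : ι → ℝ} {a C : ℝ}
    (hf : Tendsto f l (nhds a)) (hC : ∀ i, |f i| ≤ C) : |a| ≤ C :=
  le_of_tendsto' ((continuous_abs.tendsto a).comp hf) hC

section SupStability

variable {α : Type*} {s : Set α} {f g : α → ℝ} {δ : ℝ}

lemma csSup_image_le_csSup_image_add (hs : s.Nonempty) (hg : BddAbove (g '' s))
    (h : ∀ a ∈ s, f a ≤ g a + δ) : sSup (f '' s) ≤ sSup (g '' s) + δ :=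
  csSup_le (hs.image f) <| by
    rintro _ ⟨a, ha, rfl⟩
    exact (h a ha).trans (add_le_add_left (le_csSup hg ⟨a, ha, rfl⟩) δ)

lemma abs_csSup_image_sub_csSup_image_le (hs : s.Nonempty) (hf : BddAbove (f '' s))
    (hg : BddAbove (g '' s)) (h : ∀ a ∈ s, |f a - g a| ≤ δ) :
    |sSup (f '' s) - sSup (g '' s)| ≤ δ := by
  rw [abs_sub_le_iff, sub_le_iff_le_add', sub_le_iff_le_add']
  constructor
  · exact csSup_image_le_csSup_image_add hs hg fun a ha => by
      linarith [(abs_le.mp (h a ha)).2]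
  · exact csSup_image_le_csSup_image_add hs hf fun a ha => by
      linarith [(abs_le.mp (h a ha)).1]

lemma tendsto_csSup_image_of_tendstoUniformlyOn {F : ℕ → α → ℝ} {G : α → ℝ} (hs : s.Nonempty)
    (hF : ∀ m, BddAbove (F m '' s)) (hG : BddAbove (G '' s))
    (hFG : TendstoUniformlyOn F G atTop s) :
    Tendsto (fun m => sSup (F m '' s)) atTop (nhds (sSup (G '' s))) := by
  rw [Metric.tendsto_atTop]
  intro ε hε
  obtain ⟨N, hN⟩ :=
    eventually_atTop.1 (Metric.tendstoUniformlyOn_iff.1 hFG (ε / 2) (half_pos hε))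
  refine ⟨N, fun m hm => ?_⟩
  rw [Real.dist_eq]
  refine (abs_csSup_image_sub_csSup_image_le hs (hF m) hG fun a ha => ?_).trans_lt (half_lt_self hε)
  rw [← Real.dist_eq, dist_comm]
  exact (hN m hm a ha).le

end SupStability

lemma norm_integral_le_of_norm_le_on_and_off {Ω E : Type*} [MeasurableSpace Ω]
    [NormedAddCommGroup E] [NormedSpace ℝ E] {μ : Measure Ω} [IsFiniteMeasure μ] {f : Ω → E}
    {K : Set Ω} (hK : MeasurableSet K) {δ B : ℝ} (hfK : ∀ ω ∈ K, ‖f ω‖ ≤ δ)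
    (hfKc : ∀ ω ∉ K, ‖f ω‖ ≤ B) :
    ‖∫ ω, f ω ∂μ‖ ≤ δ * μ.real K + B * μ.real Kᶜ := by
  have hbound : ∀ ω, ‖f ω‖ ≤ K.indicator (fun _ => δ) ω + Kᶜ.indicator (fun _ => B) ω := by
    intro ω
    by_cases hω : ω ∈ K
    · simpa [hω] using hfK ω hω
    · simpa [hω] using hfKc ω hω
  have hδ : Integrable (K.indicator fun _ => δ) μ := (integrable_const δ).indicator hK
  have hB : Integrable (Kᶜ.indicator fun _ => B) μ := (integrable_const B).indicator hK.compl
  calc ‖∫ ω, f ω ∂μ‖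
      ≤ ∫ ω, (K.indicator (fun _ => δ) ω + Kᶜ.indicator (fun _ => B) ω) ∂μ :=
        norm_integral_le_of_norm_le (hδ.add hB) (.of_forall hbound)
    _ = δ * μ.real K + B * μ.real Kᶜ := by
        rw [integral_add hδ hB, integral_indicator_const _ hK, integral_indicator_const _ hK.compl,
          smul_eq_mul, smul_eq_mul, mul_comm, mul_comm (μ.real Kᶜ)]

section Tight

variable {Ω : Type*} [MeasurableSpace Ω] {Ps : Set (Measure Ω)}

lemma bddAbove_integral_image (hprob : ∀ P ∈ Ps, IsProbabilityMeasure P) {f : Ω → ℝ} {C : ℝ}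
    (hf : ∀ ω, |f ω| ≤ C) : BddAbove ((fun P => ∫ ω, f ω ∂P) '' Ps) := by
  refine ⟨C, ?_⟩
  rintro _ ⟨P, hP, rfl⟩
  have := hprob P hP
  have h := norm_integral_le_of_norm_le_const (μ := P) (f := f) (.of_forall hf)
  simpa using (Real.le_norm_self _).trans h

lemma tendstoUniformlyOn_integral_of_tight [MeasurableSingletonClass Ω]
    (hprob : ∀ P ∈ Ps, IsProbabilityMeasure P)
    (htight : ∀ ε : ℝ, 0 < ε → ∃ K : Finset Ω, ∀ P ∈ Ps, P ((↑K : Set Ω)ᶜ) < ENNReal.ofReal ε)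
    {X : ℕ → Ω → ℝ} {Xlim : Ω → ℝ} {C : ℝ} (hX : ∀ m, Measurable (X m))
    (hbd : ∀ m ω, |X m ω| ≤ C) (hconv : ∀ ω, Tendsto (fun m => X m ω) atTop (nhds (Xlim ω))) :
    TendstoUniformlyOn (fun m P => ∫ ω, X m ω ∂P) (fun P => ∫ ω, Xlim ω ∂P) atTop Ps := by
  have hXlim : ∀ ω, |Xlim ω| ≤ C := fun ω => abs_le_of_tendsto (hconv ω) fun m => hbd m ω
  have hXlim_meas : Measurable Xlim := measurable_of_tendsto_metrizable hX (tendsto_pi_nhds.2 hconv)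
  have hint : ∀ P ∈ Ps, ∀ f : Ω → ℝ, Measurable f → (∀ ω, |f ω| ≤ C) → Integrable f P :=
    fun P hP f hf hfC => have := hprob P hP; .of_bound hf.aestronglyMeasurable C (.of_forall hfC)
  rw [Metric.tendstoUniformlyOn_iff]
  intro ε hε
  -- `|C|` rather than `C`: nothing forces `0 ≤ C` when `Ω` is empty.
  set η := ε / (4 * (|C| + 1))
  obtain ⟨K, hK⟩ := htight η (by positivity)
  have hnear : ∀ᶠ m in atTop, ∀ ω ∈ K, ‖Xlim ω - X m ω‖ ≤ ε / 4 :=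
    K.eventually_all.2 fun ω _ => by
      simpa [dist_eq_norm] using (Metric.tendsto_nhds.1 (hconv ω) _ (by positivity)).mono
        fun m hm => (dist_comm _ _).trans_le hm.le
  filter_upwards [hnear] with m hm P hP
  have := hprob P hP
  have hfar : ∀ ω ∉ (K : Set Ω), ‖Xlim ω - X m ω‖ ≤ 2 * |C| := fun ω _ => by
    rw [Real.norm_eq_abs]
    linarith [abs_sub (Xlim ω) (X m ω), hXlim ω, hbd m ω, le_abs_self C]
  have hPKc : P.real (K : Set Ω)ᶜ ≤ η := ENNReal.toReal_le_of_le_ofReal (by positivity) (hK P hP).le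
  rw [dist_eq_norm, ← integral_sub (hint P hP _ hXlim_meas hXlim) (hint P hP _ (hX m) (hbd m))]
  calc ‖∫ ω, (Xlim ω - X m ω) ∂P‖
      ≤ ε / 4 * P.real K + 2 * |C| * P.real (K : Set Ω)ᶜ :=
        norm_integral_le_of_norm_le_on_and_off K.measurableSet hm hfar
    _ ≤ ε / 4 * 1 + 2 * |C| * η := by gcongr; exact measureReal_le_one
    _ < ε := by
        have : 2 * |C| * η ≤ ε / 2 := by
          rw [mul_div_assoc', div_le_div_iff₀ (by positivity) two_pos]
          nlinarith [abs_nonneg C]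
        linarith

end Tight

/-- Dominated convergence theorem for the sublinear expectation over a
uniformly tight family: if `X_m → X` pointwise and `|X_m| ≤ C`, then
`lim_m E[X_m] = E[X]`. -/
theorem dominated_convergence
    (Ps : Set (Measure ℕ)) (hPs : Ps.Nonempty)
    (hprob : ∀ P ∈ Ps, IsProbabilityMeasure P)
    (htight : ∀ ε : ℝ, 0 < ε → ∃ K : Finset ℕ,
      ∀ P ∈ Ps, P ((↑K : Set ℕ)ᶜ) < ENNReal.ofReal ε)
    (X : ℕ → ℕ → ℝ) (Xlim : ℕ → ℝ) (C : ℝ)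
    (hbd : ∀ m ω, |X m ω| ≤ C)
    (hconv : ∀ ω, Tendsto (fun m => X m ω) atTop (nhds (Xlim ω))) :
    Tendsto (fun m => sSup ((fun P => ∫ ω, X m ω ∂P) '' Ps)) atTop
      (nhds (sSup ((fun P => ∫ ω, Xlim ω ∂P) '' Ps))) :=
  tendsto_csSup_image_of_tendstoUniformlyOn hPs
    (fun m => bddAbove_integral_image hprob (hbd m))
    (bddAbove_integral_image hprob fun ω => abs_le_of_tendsto (hconv ω) fun m => hbd m ω)
    (tendstoUniformlyOn_integral_of_tight hprob htight (fun _ => measurable_of_countable _)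
      hbd hconv)
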